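/- Let C be the Cartan matrix of type D_{m+2} with vertex set I = {i, k, j₁, …, j_m}, where j₁ is adjacent to i, k, and j₂, and j_β is adjacent to j_{β−1} and j_{β+1} for 2 ≤ β ≤ m−1. Let d ∈ ℕ and ν ∈ ℕ^I. If d·j_m − Cν ∈ ℕ^I (where d·j_m denotes d times the basis vector at j_m), then ν_i + ν_k ≤ ν_{j₁} ≤ ν_{j₂} ≤ ⋯ ≤ ν_{j_m} ≤ d. -/
import Mathlib


/-- Type `D_{m+2}` necessary condition: if `d·j_m - Cν ∈ ℕ^I` for the type `D_{m+2}`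
Cartan matrix (with vertices `i, k, j₁, …, j_m`, where `ν_{j_β}` is written `νj β`),
then `ν_i + ν_k ≤ ν_{j₁} ≤ ν_{j₂} ≤ ⋯ ≤ ν_{j_m} ≤ d`. -/
theorem typeD_chain_of_dominant (m : ℕ) (hm : 2 ≤ m)
    (d : ℕ) (νi νk : ℕ) (νj : ℕ → ℕ)
    (hi : 2 * νi ≤ νj 1)
    (hk : 2 * νk ≤ νj 1)
    (hj1 : 2 * νj 1 ≤ νi + νk + νj 2)
    (hmid : ∀ β, 2 ≤ β → β ≤ m - 1 → 2 * νj β ≤ νj (β - 1) + νj (β + 1))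
    (hjm : 2 * νj m ≤ d + νj (m - 1)) :
    νi + νk ≤ νj 1 ∧ (∀ β, 1 ≤ β → β < m → νj β ≤ νj (β + 1)) ∧ νj m ≤ d := by
  have h0 : νi + νk ≤ νj 1 := by omega
  have hchain : ∀ β, 1 ≤ β → β < m → νj β ≤ νj (β + 1) := by
    intro β hβ1
    induction β, hβ1 using Nat.le_induction with
    | base => intro _; show νj 1 ≤ νj 2; omega
    | succ n hn ih =>
      intro hlt
      have h1 : n < m := by omega
      have h2 := ih h1
      have h3 := hmid (n + 1) (by omega) (by omega)
      simp only [Nat.add_sub_cancel] at h3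
      omega
  refine ⟨h0, hchain, ?_⟩
  have := hchain (m - 1) (by omega) (by omega)
  have hm1 : m - 1 + 1 = m := by omega
  rw [hm1] at this
  omega
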